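/- arXiv:1111.7172 — 2 statements merged into one kernel-verified Lean document; each statement's English description precedes it below -/
import Mathlib

section
/- Let d ≥ 3 and n ≥ 2 be integers, let ≺' be an arbitrary total order on T_γ, and let w ∈ G(d,d,n) with w ≤_T γ and ℓ_T(w) ≥ 1. Then the lexicographically smallest (with respect to ≺' applied componentwise) reduced T-word for w is strictly increasing with respect to ≺'. (Every letter of a reduced T-word for w lies in T_γ, and the reduced T-words for w are exactly the label sequences, under the natural labeling (u,v) ↦ u⁻¹v, of the maximal chains of the interval [ε,w] of NC_{G(d,d,n)}(γ).) -/
open Matrix Complex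

/-- The primitive `d`-th root of unity `ζ_d = exp(2πi/d)`. -/
noncomputable def zetaC (d : ℕ) : ℂ := Complex.exp (2 * (Real.pi : ℂ) * Complex.I / (d : ℂ))

/-- The ambient group of invertible `n × n` complex matrices. -/
abbrev GLn (n : ℕ) := GL (Fin n) ℂ

/-- Membership in `G(d,d,n)`: monomial matrices whose nonzero entries are `d`-th roots of
unity with product `1`. -/
def IsGdd (d n : ℕ) (w : GLn n) : Prop :=
  ∃ (σ : Equiv.Perm (Fin n)) (z : Fin n → ℂ),
    (∀ j, z j ^ d = 1) ∧ (∏ j, z j) = 1 ∧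
    ∀ k l : Fin n, (w : Matrix (Fin n) (Fin n) ℂ) k l = if k = σ l then z l else 0

/-- The fixed space `{x : ℂⁿ | w x = x}` of `w`. -/
noncomputable def fixSpace {n : ℕ} (w : GLn n) : Submodule ℂ (Fin n → ℂ) :=
  LinearMap.ker ((w : Matrix (Fin n) (Fin n) ℂ).mulVecLin - LinearMap.id)

/-- A reflection of `G(d,d,n)`: an element of the group of finite order whose fixed space
has dimension `n - 1`. -/
def IsGddRefl (d n : ℕ) (t : GLn n) : Prop :=
  IsGdd d n t ∧ IsOfFinOrder t ∧ Module.finrank ℂ (fixSpace t) = n - 1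

/-- The absolute (reflection) length `ℓ_T`. -/
noncomputable def ellT (d n : ℕ) (w : GLn n) : ℕ :=
  sInf {k | ∃ l : List (GLn n), l.length = k ∧ (∀ t ∈ l, IsGddRefl d n t) ∧ l.prod = w}

/-- The absolute order `u ≤_T v`. -/
def absLe (d n : ℕ) (u v : GLn n) : Prop :=
  ellT d n v = ellT d n u + ellT d n (u⁻¹ * v)

/-- The matrix of the Coxeter element `γ = [1⁰ 2⁰ … (n−1)⁰][n⁰]⁻¹`:
`γ e_i = e_{i+1}` for `1 ≤ i ≤ n−2` (1-based), `γ e_{n−1} = ζ_d e_1`, `γ e_n = ζ_d⁻¹ e_n`. -/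
noncomputable def gammaMat (d n : ℕ) : Matrix (Fin n) (Fin n) ℂ :=
  Matrix.of fun k l : Fin n =>
    if (l : ℕ) + 2 < n ∧ (k : ℕ) = (l : ℕ) + 1 then 1
    else if (l : ℕ) + 2 = n ∧ (k : ℕ) = 0 then zetaC d
    else if (l : ℕ) + 1 = n ∧ k = l then (zetaC d)⁻¹
    else 0

/-- The matrix of the reflection `((i⁰ jˢ))` (1-based indices `i < j`): it sends
`e_i ↦ ζ_dˢ e_j`, `e_j ↦ ζ_d⁻ˢ e_i` and fixes the other basis vectors. -/
noncomputable def reflMat (d n : ℕ) (i j s : ℕ) : Matrix (Fin n) (Fin n) ℂ :=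
  Matrix.of fun k l : Fin n =>
    if (l : ℕ) + 1 = i ∧ (k : ℕ) + 1 = j then zetaC d ^ s
    else if (l : ℕ) + 1 = j ∧ (k : ℕ) + 1 = i then (zetaC d ^ s)⁻¹
    else if k = l ∧ (k : ℕ) + 1 ≠ i ∧ (k : ℕ) + 1 ≠ j then 1
    else 0

/-- Reduced `T`-words for `w`. -/
def IsReducedTWord (d n : ℕ) (w : GLn n) (l : List (GLn n)) : Prop :=
  (∀ t ∈ l, IsGddRefl d n t) ∧ l.prod = w ∧ l.length = ellT d n w

/-- The set `T_γ` of reflections below `γ` in absolute order. -/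
def TgammaSet (d n : ℕ) (γ : GLn n) : Set (GLn n) :=
  {t : GLn n | IsGddRefl d n t ∧ absLe d n t γ}

/-- The list of (1-based) triples `(i, j, s)` indexing the reflections `((i⁰ jˢ))` of `T_γ`
in the order `≺`: first `((i⁰ j⁰))` with `1 ≤ i < j ≤ n−1` lexicographically, then for each
`i = 1, …, n−1` the block `((i⁰ n⁰)), ((i⁰ n^{d−1})), …, ((i⁰ n¹)),
((i⁰ (i+1)^{d−1})), …, ((i⁰ (n−1)^{d−1}))`. -/
def reflTriples (d n : ℕ) : List (ℕ × ℕ × ℕ) :=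
  ((List.range' 1 (n - 2)).flatMap fun i =>
    (List.range' (i + 1) (n - 1 - i)).map fun j => (i, j, 0)) ++
  ((List.range' 1 (n - 1)).flatMap fun i =>
    ((i, n, 0) :: ((List.range' 1 (d - 1)).map fun r => (i, n, d - r))) ++
    ((List.range' (i + 1) (n - 1 - i)).map fun j => (i, j, d - 1)))

/-- `a` occurs (strictly) before `b` in the list `l`. -/
def ListBefore {α : Type*} (l : List α) (a b : α) : Prop :=
  ∃ l1 l2 l3 : List α, l = l1 ++ a :: (l2 ++ b :: l3)

/-- The total order `≺` on `T_γ`. -/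
def precRel (d n : ℕ) (t t' : GLn n) : Prop :=
  ∃ p q : ℕ × ℕ × ℕ,
    (t : Matrix (Fin n) (Fin n) ℂ) = reflMat d n p.1 p.2.1 p.2.2 ∧
    (t' : Matrix (Fin n) (Fin n) ℂ) = reflMat d n q.1 q.2.1 q.2.2 ∧
    ListBefore (reflTriples d n) p q

section ELShellability

variable {P : Type*} {Λ : Type*}

/-- `b` covers `a` with respect to the relation `le`. -/
def CovRel (le : P → P → Prop) (a b : P) : Prop :=
  le a b ∧ a ≠ b ∧ ∀ c, le a c → le c b → c = a ∨ c = b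

/-- `c` is a maximal (i.e. saturated) chain of the interval `[x, y]`: a sequence of covers
starting at `x` and ending at `y`. -/
def IsMaxChainIn (le : P → P → Prop) (x y : P) (c : List P) : Prop :=
  c.Chain' (CovRel le) ∧ c.head? = some x ∧ c.getLast? = some y

/-- The label sequence of a chain `c` under the edge labeling `lab`. -/
def labelSeq (lab : P → P → Λ) (c : List P) : List Λ :=
  (c.zip c.tail).map fun p => lab p.1 p.2

/-- `lab` is an EL-labeling with respect to the order `le` on `P` and the (strict) order
`lt` on the label poset `Λ`: every closed interval has exactly one maximal chain with
strictly increasing label sequence, and this chain is lexicographically strictly smaller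
than every other maximal chain of the interval. -/
def IsELLabeling (le : P → P → Prop) (lt : Λ → Λ → Prop) (lab : P → P → Λ) : Prop :=
  ∀ x y : P, le x y →
    ∃ c : List P, IsMaxChainIn le x y c ∧ (labelSeq lab c).Chain' lt ∧
      ∀ c' : List P, IsMaxChainIn le x y c' → c' ≠ c →
        ¬ (labelSeq lab c').Chain' lt ∧ List.Lex lt (labelSeq lab c) (labelSeq lab c')

/-- EL-shellability: existence of an EL-labeling into some strictly ordered label type. -/
def IsELShellable (le : P → P → Prop) : Prop :=
  ∃ (Λ' : Type) (lt : Λ' → Λ' → Prop), IsStrictOrder Λ' lt ∧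
    ∃ lab : P → P → Λ', IsELLabeling le lt lab

end ELShellability

/-- The set of `m`-divisible noncrossing partitions `NC^{(m)}` (as `(m+1)`-tuples). -/
def NCmSet (d n m : ℕ) (γ : GLn n) : Set (Fin (m + 1) → GLn n) :=
  {w | (List.ofFn w).prod = γ ∧ (∑ i, ellT d n (w i)) = ellT d n γ}

/-- The order on `m`-divisible noncrossing partitions:
`(u₀; u₁, …, u_m) ≤ (v₀; v₁, …, v_m)` iff `v_i ≤_T u_i` for all `1 ≤ i ≤ m`. -/
def NCmLe (d n : ℕ) {m : ℕ} (u v : Fin (m + 1) → GLn n) : Prop :=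
  ∀ i : Fin (m + 1), i ≠ 0 → absLe d n (v i) (u i)

section Shifts

variable {G : Type*} [Monoid G]

/-- The left-shift of a word at (1-based) position `i`:
`(t₁, …, t_{i−2}, t_i, t_i t_{i−1} t_i, t_{i+1}, …, t_k)`. -/
def leftShiftAt (l : List G) (i : ℕ) : List G :=
  l.take (i - 2) ++ [l.getD (i - 1) 1, l.getD (i - 1) 1 * l.getD (i - 2) 1 * l.getD (i - 1) 1]
    ++ l.drop i

/-- The right-shift of a word at (1-based) position `i`:
`(t₁, …, t_{i−1}, t_i t_{i+1} t_i, t_i, t_{i+2}, …, t_k)`. -/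
def rightShiftAt (l : List G) (i : ℕ) : List G :=
  l.take (i - 1) ++ [l.getD (i - 1) 1 * l.getD i 1 * l.getD (i - 1) 1, l.getD (i - 1) 1]
    ++ l.drop (i + 1)

/-- One left-shift step between words. -/
def LeftShiftStep (l l' : List G) : Prop :=
  ∃ i, 2 ≤ i ∧ i ≤ l.length ∧ l' = leftShiftAt l i

/-- The word `l` has a descent at (1-based) position `p` with respect to the strict
relation `lt`, i.e. `t_p ≻ t_{p+1}`. -/
def HasDescentAt (lt : G → G → Prop) (l : List G) (p : ℕ) : Prop :=
  lt (l.getD p 1) (l.getD (p - 1) 1)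

end Shifts

/-- A `γ`-compatible reflection ordering (Definition 4.2 of the paper): for all
non-commuting reflections `t₁, t₂ ≤_T γ` and every rank-2 element `x ≤_T γ` above both,
there is exactly one ordered pair `(a, b)` of reflections below `x` with `ab = x` and
`a ≺ b`. -/
def IsCompatibleOrdering (d n : ℕ) (γ : GLn n) (lt : GLn n → GLn n → Prop) : Prop :=
  ∀ t1 t2 : GLn n, IsGddRefl d n t1 → IsGddRefl d n t2 →
    absLe d n t1 γ → absLe d n t2 γ → t1 * t2 ≠ t2 * t1 →
    ∀ x : GLn n, ellT d n x = 2 → absLe d n x γ → absLe d n t1 x → absLe d n t2 x →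
      ∃! p : GLn n × GLn n, IsGddRefl d n p.1 ∧ IsGddRefl d n p.2 ∧
        absLe d n p.1 x ∧ absLe d n p.2 x ∧ p.1 * p.2 = x ∧ lt p.1 p.2

/-!
If a reduced `T`-word for `w` has a descent `a, b` (with `¬ a ≺' b`), the Hurwitz move
`a, b ↦ b, b⁻¹ a b` produces another reduced word for `w`. If the word is
lexicographically minimal, this new word cannot be smaller, so `a ≺' b` or `a = b`; the latter
is impossible since `a²` is trivial or a reflection, so `a, a` never occurs in a reduced word.
Comparing the two words at their first difference uses irreflexivity of `≺'` on the common
prefix; its letters lie in `T_γ`, since every letter `t` of a reduced word for `w` satisfies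
`t ≤_T w ≤_T γ`.
-/

lemma List.prod_map_conj {G : Type*} [Group G] (t : G) (l : List G) :
    (l.map fun s => t⁻¹ * s * t).prod = t⁻¹ * l.prod * t := by
  induction l with
  | nil => simp
  | cons s l ih => simp only [List.map_cons, List.prod_cons, ih]; group

lemma List.Lex.rel_or_eq_of_append_cons {α : Type*} {r : α → α → Prop} {a b : α}
    {s₁ s₂ : List α} :
    ∀ {pre : List α}, (∀ x ∈ pre, ¬ r x x) →
      List.Lex r (pre ++ a :: s₁) (pre ++ b :: s₂) → r a b ∨ a = b
  | [], _, h => by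
    cases h with
    | rel h => exact Or.inl h
    | cons => exact Or.inr rfl
  | x :: _, hirr, h => by
    cases h with
    | rel h => exact absurd h (hirr x List.mem_cons_self)
    | cons h =>
      exact List.Lex.rel_or_eq_of_append_cons (fun y hy => hirr y (List.mem_cons_of_mem _ hy)) h

section WordLength

variable {G : Type*} [Group G]

-- `0` when `g` is not a product of elements of `T`, hence the closure hypotheses below.
noncomputable def wordLength (T : Set G) (g : G) : ℕ :=
  sInf {k | ∃ l : List G, l.length = k ∧ (∀ t ∈ l, t ∈ T) ∧ l.prod = g}

def IsReducedWord (T : Set G) (g : G) (l : List G) : Prop :=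
  (∀ t ∈ l, t ∈ T) ∧ l.prod = g ∧ l.length = wordLength T g

def AbsoluteLE (T : Set G) (u v : G) : Prop :=
  wordLength T v = wordLength T u + wordLength T (u⁻¹ * v)

variable {T : Set G}

lemma wordLength_le_length {l : List G} (hl : ∀ t ∈ l, t ∈ T) :
    wordLength T l.prod ≤ l.length :=
  Nat.sInf_le ⟨l, rfl, hl, rfl⟩

lemma wordLength_le_one {t : G} (ht : t ∈ T) : wordLength T t ≤ 1 := by
  simpa using wordLength_le_length (T := T) (l := [t]) (by simpa using ht)

lemma mem_closure_of_wordLength_pos {g : G} (h : 0 < wordLength T g) :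
    g ∈ Subgroup.closure T := by
  obtain ⟨-, l, -, hl, rfl⟩ := Nat.nonempty_of_pos_sInf h
  exact list_prod_mem fun t ht => Subgroup.subset_closure (hl t ht)

lemma exists_isReducedWord (hT : ∀ t ∈ T, IsOfFinOrder t) {g : G}
    (hg : g ∈ Subgroup.closure T) : ∃ l, IsReducedWord T g l := by
  rw [← Subgroup.mem_toSubmonoid, Subgroup.closure_toSubmonoid_of_isOfFinOrder hT] at hg
  obtain ⟨l, hl, hp⟩ := Submonoid.exists_list_of_mem_closure hg
  obtain ⟨l', hlen, hl', hp'⟩ := Nat.sInf_mem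
    (s := {k | ∃ l : List G, l.length = k ∧ (∀ t ∈ l, t ∈ T) ∧ l.prod = g})
    ⟨_, l, rfl, hl, hp⟩
  exact ⟨l', hl', hp', hp' ▸ hlen⟩

lemma wordLength_mul_le (hT : ∀ t ∈ T, IsOfFinOrder t) {x y : G}
    (hx : x ∈ Subgroup.closure T) (hy : y ∈ Subgroup.closure T) :
    wordLength T (x * y) ≤ wordLength T x + wordLength T y := by
  obtain ⟨lx, hlx, rfl, hx⟩ := exists_isReducedWord hT hx
  obtain ⟨ly, hly, rfl, hy⟩ := exists_isReducedWord hT hy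
  calc wordLength T (lx.prod * ly.prod) = wordLength T (lx ++ ly).prod := by
        rw [List.prod_append]
    _ ≤ (lx ++ ly).length :=
        wordLength_le_length (List.forall_mem_append.mpr ⟨hlx, hly⟩)
    _ = _ := by rw [List.length_append, hx, hy]

lemma AbsoluteLE.trans (hT : ∀ t ∈ T, IsOfFinOrder t) {u v w : G}
    (hu : u ∈ Subgroup.closure T) (hv : v ∈ Subgroup.closure T) (hw : w ∈ Subgroup.closure T)
    (huv : AbsoluteLE T u v) (hvw : AbsoluteLE T v w) : AbsoluteLE T u w := by
  have hmem {x y : G} (hx : x ∈ Subgroup.closure T) (hy : y ∈ Subgroup.closure T) :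
      x⁻¹ * y ∈ Subgroup.closure T :=
    mul_mem (inv_mem hx) hy
  have hw_le := wordLength_mul_le hT hu (hmem hu hw)
  have huw_le := wordLength_mul_le hT (hmem hu hv) (hmem hv hw)
  rw [mul_inv_cancel_left] at hw_le
  rw [show u⁻¹ * v * (v⁻¹ * w) = u⁻¹ * w by group] at huw_le
  unfold AbsoluteLE at *
  omega

lemma AbsoluteLE.of_mem_isReducedWord (hT : ∀ t ∈ T, IsOfFinOrder t)
    (hconj : ∀ a ∈ T, ∀ b ∈ T, b⁻¹ * a * b ∈ T) {w t : G} {c : List G}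
    (hc : IsReducedWord T w c) (ht : t ∈ c) : AbsoluteLE T t w := by
  obtain ⟨hcT, hcw, hclen⟩ := hc
  obtain ⟨l₁, l₂, rfl⟩ := List.append_of_mem ht
  simp only [List.forall_mem_append, List.forall_mem_cons] at hcT
  obtain ⟨hl₁, htT, hl₂⟩ := hcT
  -- pulling `t` to the front conjugates the letters it passes
  set L := (l₁.map fun s => t⁻¹ * s * t) ++ l₂
  have hLT : ∀ s ∈ L, s ∈ T := List.forall_mem_append.mpr
    ⟨List.forall_mem_map.mpr fun s hs => hconj s (hl₁ s hs) t htT, hl₂⟩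
  have hLprod : L.prod = t⁻¹ * w := by
    rw [← hcw]
    simp only [L, List.prod_append, List.prod_map_conj, List.prod_cons]; group
  have hshort : wordLength T (t⁻¹ * w) + 1 ≤ wordLength T w := by
    have := wordLength_le_length hLT
    rw [hLprod] at this
    simp only [L, ← hclen, List.length_append, List.length_map, List.length_cons] at this ⊢
    omega
  have hsplit := wordLength_mul_le hT (Subgroup.subset_closure htT)
    (hLprod ▸ list_prod_mem fun s hs => Subgroup.subset_closure (hLT s hs))
  rw [mul_inv_cancel_left] at hsplit
  have := wordLength_le_one htT
  unfold AbsoluteLE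
  omega

lemma IsReducedWord.swap (hconj : ∀ a ∈ T, ∀ b ∈ T, b⁻¹ * a * b ∈ T) {w a b : G}
    {l₁ l₂ : List G} (hc : IsReducedWord T w (l₁ ++ a :: b :: l₂)) :
    IsReducedWord T w (l₁ ++ b :: (b⁻¹ * a * b) :: l₂) := by
  obtain ⟨hcT, hcw, hclen⟩ := hc
  simp only [List.forall_mem_append, List.forall_mem_cons] at hcT
  obtain ⟨hl₁, ha, hb, hl₂⟩ := hcT
  refine ⟨?_, ?_, ?_⟩
  · simp only [List.forall_mem_append, List.forall_mem_cons]
    exact ⟨hl₁, hb, hconj a ha b hb, hl₂⟩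
  · rw [← hcw]; simp only [List.prod_append, List.prod_cons]; group
  · rw [← hclen]; simp

lemma not_isReducedWord_append_cons_cons_self (hsq : ∀ t ∈ T, t * t = 1 ∨ t * t ∈ T)
    {w a : G} {l₁ l₂ : List G} : ¬ IsReducedWord T w (l₁ ++ a :: a :: l₂) := by
  rintro ⟨hcT, rfl, hclen⟩
  simp only [List.forall_mem_append, List.forall_mem_cons] at hcT
  obtain ⟨hl₁, ha, -, hl₂⟩ := hcT
  simp only [List.length_append, List.length_cons] at hclen
  rcases hsq a ha with haa | haa
  · have hprod : (l₁ ++ l₂).prod = (l₁ ++ a :: a :: l₂).prod := by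
      simp [List.prod_append, ← mul_assoc, haa]
    have := wordLength_le_length (T := T) (List.forall_mem_append.mpr ⟨hl₁, hl₂⟩)
    rw [hprod, List.length_append] at this
    omega
  · have hprod : (l₁ ++ (a * a) :: l₂).prod = (l₁ ++ a :: a :: l₂).prod := by
      simp [List.prod_append, mul_assoc]
    have := wordLength_le_length (T := T) (l := l₁ ++ (a * a) :: l₂)
      (by simp only [List.forall_mem_append, List.forall_mem_cons]; exact ⟨hl₁, haa, hl₂⟩)
    rw [hprod, List.length_append, List.length_cons] at this
    omega

theorem IsReducedWord.isChain_of_lex_minimal (hconj : ∀ a ∈ T, ∀ b ∈ T, b⁻¹ * a * b ∈ T)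
    (hsq : ∀ t ∈ T, t * t = 1 ∨ t * t ∈ T) {lt : G → G → Prop} {w : G} {c : List G}
    (hc : IsReducedWord T w c) (hirr : ∀ t ∈ c, ¬ lt t t)
    (hmin : ∀ c', IsReducedWord T w c' → c' = c ∨ List.Lex lt c c') : c.IsChain lt := by
  rw [List.isChain_iff_forall_rel_of_append_cons_cons]
  rintro a b l₁ l₂ rfl
  by_contra hab
  have hne : a ≠ b := by
    rintro rfl
    exact not_isReducedWord_append_cons_cons_self hsq hc
  rcases hmin _ (hc.swap hconj) with heq | hlex
  · simp only [List.append_cancel_left_eq, List.cons.injEq] at heq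
    exact hne heq.1.symm
  · exact (List.Lex.rel_or_eq_of_append_cons (fun x hx => hirr x (by simp [hx])) hlex).elim
      hab hne

end WordLength

section Gdd

variable {d n : ℕ}

lemma isGdd_one : IsGdd d n 1 :=
  ⟨1, 1, fun _ => one_pow d, Finset.prod_const_one, fun k l => by
    rw [Units.val_one, Matrix.one_apply]; rfl⟩

lemma IsGdd.mul {a b : GLn n} (ha : IsGdd d n a) (hb : IsGdd d n b) : IsGdd d n (a * b) := by
  obtain ⟨σ, z, hz, hzp, ha⟩ := ha
  obtain ⟨τ, y, hy, hyp, hb⟩ := hb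
  refine ⟨τ.trans σ, fun l => z (τ l) * y l, fun l => by rw [mul_pow, hz, hy, one_mul],
    ?_, fun k l => ?_⟩
  · rw [Finset.prod_mul_distrib, Equiv.prod_comp τ z, hzp, hyp, one_mul]
  · rw [Units.val_mul, Matrix.mul_apply, Finset.sum_eq_single (τ l)]
    · simp only [ha, hb, if_true, Equiv.trans_apply, ite_mul, zero_mul]
      rfl
    · intro m _ hm
      rw [hb, if_neg hm, mul_zero]
    · simp

variable (d n) in
def gddSubmonoid : Submonoid (GLn n) where
  carrier := {w | IsGdd d n w}
  mul_mem' := IsGdd.mul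
  one_mem' := isGdd_one

lemma IsGdd.inv_of_isOfFinOrder {a : GLn n} (ha : IsGdd d n a) (hfin : IsOfFinOrder a) :
    IsGdd d n a⁻¹ := by
  have hpow : a⁻¹ ∈ Submonoid.powers a :=
    hfin.mem_powers_iff_mem_zpowers.mpr (inv_mem (Subgroup.mem_zpowers a))
  exact Submonoid.powers_le.mpr (show a ∈ gddSubmonoid d n from ha) hpow

lemma mem_fixSpace {w : GLn n} {x : Fin n → ℂ} :
    x ∈ fixSpace w ↔ (w : Matrix (Fin n) (Fin n) ℂ) *ᵥ x = x := by
  simp [fixSpace, sub_eq_zero]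

lemma finrank_fixSpace_conj (a b : GLn n) :
    Module.finrank ℂ (fixSpace (b⁻¹ * a * b)) = Module.finrank ℂ (fixSpace a) := by
  set e := (Matrix.GeneralLinearGroup.toLin b).toLinearEquiv
  have he : ∀ x, e x = (b : Matrix (Fin n) (Fin n) ℂ) *ᵥ x := fun _ => rfl
  have hinv : ∀ x y, ((b⁻¹ : GLn n) : Matrix (Fin n) (Fin n) ℂ) *ᵥ y = x ↔
      y = (b : Matrix (Fin n) (Fin n) ℂ) *ᵥ x := by
    intro x y
    constructor <;> rintro rfl <;> simp [Matrix.mulVec_mulVec]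
  have hfix : fixSpace (b⁻¹ * a * b) = (fixSpace a).comap (e : (Fin n → ℂ) →ₗ[ℂ] _) := by
    ext x
    simp only [Submodule.mem_comap, mem_fixSpace, LinearEquiv.coe_coe, he, Units.val_mul,
      ← Matrix.mulVec_mulVec, hinv]
  rw [hfix, Submodule.comap_equiv_eq_map_symm, LinearEquiv.finrank_map_eq]

lemma fixSpace_le_fixSpace_mul_self (a : GLn n) : fixSpace a ≤ fixSpace (a * a) := by
  intro x hx
  rw [mem_fixSpace] at hx ⊢
  rw [Units.val_mul, ← Matrix.mulVec_mulVec, hx, hx]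

lemma fixSpace_ne_top {a : GLn n} (ha : a ≠ 1) : fixSpace a ≠ ⊤ := by
  intro htop
  have hfix (x : Fin n → ℂ) : (a : Matrix (Fin n) (Fin n) ℂ) *ᵥ x = x :=
    mem_fixSpace.mp (htop ▸ Submodule.mem_top)
  exact ha <| Units.ext <| Matrix.toLin'.injective <| LinearMap.ext fun x => by
    simpa using hfix x

lemma IsGddRefl.conj {a b : GLn n} (ha : IsGddRefl d n a) (hb : IsGddRefl d n b) :
    IsGddRefl d n (b⁻¹ * a * b) := by
  obtain ⟨haG, hafin, harank⟩ := ha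
  refine ⟨((hb.1.inv_of_isOfFinOrder hb.2.1).mul haG).mul hb.1, ?_,
    finrank_fixSpace_conj a b ▸ harank⟩
  simpa using (MulAut.conj b⁻¹).toMonoidHom.isOfFinOrder hafin

lemma IsGddRefl.mul_self_eq_one_or {a : GLn n} (ha : IsGddRefl d n a) :
    a * a = 1 ∨ IsGddRefl d n (a * a) := by
  obtain ⟨haG, hafin, harank⟩ := ha
  rcases eq_or_ne (a * a) 1 with h | hne
  · exact Or.inl h
  refine Or.inr ⟨haG.mul haG, by simpa [sq] using hafin.pow (n := 2), ?_⟩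
  have hge : n - 1 ≤ Module.finrank ℂ (fixSpace (a * a)) :=
    harank ▸ Submodule.finrank_mono (fixSpace_le_fixSpace_mul_self a)
  have hlt := Submodule.finrank_lt (fixSpace_ne_top hne)
  rw [Module.finrank_fin_fun] at hlt
  omega

end Gdd

theorem lex_smallest_reduced_word_is_rising_general
    (d n : ℕ)
    (γ : GLn n)
    (lt : GLn n → GLn n → Prop)
    (hirr : ∀ t ∈ TgammaSet d n γ, ¬ lt t t)
    (w : GLn n) (hw : absLe d n w γ) (hlw : 1 ≤ ellT d n w)
    (c : List (GLn n)) (hc : IsReducedTWord d n w c)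
    (hmin : ∀ c' : List (GLn n), IsReducedTWord d n w c' → c' = c ∨ List.Lex lt c c') :
    c.Chain' lt := by
  -- for this `T`, `ellT`, `absLe` and `IsReducedTWord` are definitionally `wordLength`,
  -- `AbsoluteLE` and `IsReducedWord`
  let T : Set (GLn n) := {t | IsGddRefl d n t}
  have hfin : ∀ t ∈ T, IsOfFinOrder t := fun _ ht => ht.2.1
  have hconj : ∀ a ∈ T, ∀ b ∈ T, b⁻¹ * a * b ∈ T := fun _ ha _ hb => ha.conj hb
  have hw_mem : w ∈ Subgroup.closure T := mem_closure_of_wordLength_pos hlw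
  have hγ_mem : γ ∈ Subgroup.closure T := mem_closure_of_wordLength_pos
    (show 0 < ellT d n γ by unfold absLe at hw; omega)
  have hletters (t : GLn n) (ht : t ∈ c) : t ∈ TgammaSet d n γ :=
    ⟨hc.1 t ht, AbsoluteLE.trans hfin (Subgroup.subset_closure (hc.1 t ht)) hw_mem hγ_mem
      (AbsoluteLE.of_mem_isReducedWord hfin hconj hc ht) hw⟩
  exact IsReducedWord.isChain_of_lex_minimal hconj (fun _ ht => ht.mul_self_eq_one_or) hc
    (fun t ht => hirr t (hletters t ht)) hmin

/-- For any total order `≺'` on `T_γ` and any `w ≤_T γ` with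
`ℓ_T(w) ≥ 1`, the lexicographically smallest reduced `T`-word for `w` is strictly
increasing with respect to `≺'`. -/
theorem lex_smallest_reduced_word_is_rising
    (d n : ℕ) (hd : 3 ≤ d) (hn : 2 ≤ n)
    (γ : GLn n) (hγ : (γ : Matrix (Fin n) (Fin n) ℂ) = gammaMat d n)
    (lt : GLn n → GLn n → Prop)
    (hirr : ∀ t ∈ TgammaSet d n γ, ¬ lt t t)
    (htrans : ∀ a ∈ TgammaSet d n γ, ∀ b ∈ TgammaSet d n γ, ∀ c ∈ TgammaSet d n γ,
      lt a b → lt b c → lt a c)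
    (htot : ∀ a ∈ TgammaSet d n γ, ∀ b ∈ TgammaSet d n γ, a ≠ b → lt a b ∨ lt b a)
    (w : GLn n) (hw : absLe d n w γ) (hlw : 1 ≤ ellT d n w)
    (c : List (GLn n)) (hc : IsReducedTWord d n w c)
    (hmin : ∀ c' : List (GLn n), IsReducedTWord d n w c' → c' = c ∨ List.Lex lt c c') :
    c.Chain' lt :=
  lex_smallest_reduced_word_is_rising_general d n γ lt hirr w hw hlw c hc hmin
end

section
/- Let d ≥ 3 and n ≥ 2 be integers. Then γ has order d(n−1) in G(d,d,n), and there exists a vector v ∈ ℂ^n with γv = e^{2πi/(d(n−1))}·v such that v does not lie in the fixed space of any reflection of G(d,d,n); that is, γ is a regular element for the primitive d(n−1)-th root of unity e^{2πi/(d(n−1))}, where d(n−1) is the largest degree of G(d,d,n), and hence γ is a Coxeter element of G(d,d,n). -/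
open Matrix Complex

/-! On `e_1, …, e_{n-1}` the element `γ` acts as the companion matrix of `X^{n-1} - ζ_d`, and it
scales `e_n` by `ζ_d⁻¹`; so `γ^{n-1}` is diagonal with `d`-th roots of unity on the diagonal and
`γ^{d(n-1)} = 1`. For `θ = ζ_{d(n-1)}` the vector `v = (θ^{n-2}, …, θ, 1, 0)` satisfies `γ v = θ v`,
which forces the order to be exactly `d(n-1)`. The `d`-th powers of the coordinates of `v` are
pairwise distinct (the nonzero ones are distinct powers of the primitive `(n-1)`-th root `θ^d`).
An element of `G(d,d,n)` fixing such a vector multiplies each coordinate by a `d`-th root of unity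
while permuting the coordinates, so the permutation is trivial; the scalars are then `1` away from
the (at most one) zero coordinate, and also there because their product is `1`. Hence only the
identity fixes `v`, and `v` lies in no reflecting hyperplane. -/

lemma zetaC_isPrimitiveRoot {d : ℕ} (hd : d ≠ 0) : IsPrimitiveRoot (zetaC d) d :=
  Complex.isPrimitiveRoot_exp d hd

lemma zetaC_mul_pow {a : ℕ} (b : ℕ) (ha : a ≠ 0) : zetaC (a * b) ^ a = zetaC b := by
  rw [zetaC, zetaC, ← Complex.exp_nat_mul, ← mul_div_assoc, Nat.cast_mul,
    mul_div_mul_left _ _ (Nat.cast_ne_zero.mpr ha)]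

lemma Matrix.pow_mulVec_of_mulVec_eq_smul {ι R : Type*} [Fintype ι] [DecidableEq ι] [CommRing R]
    {A : Matrix ι ι R} {v : ι → R} {c : R} (h : A *ᵥ v = c • v) (m : ℕ) :
    (A ^ m) *ᵥ v = c ^ m • v := by
  induction m with
  | zero => simp
  | succ m ih => rw [pow_succ', ← mulVec_mulVec, ih, mulVec_smul, h, smul_smul, pow_succ]

lemma Matrix.pow_eq_one_of_mulVec_eq_smul {ι R : Type*} [Fintype ι] [DecidableEq ι] [CommRing R]
    [IsDomain R] {A : Matrix ι ι R} {v : ι → R} {c : R} (h : A *ᵥ v = c • v) (hv : v ≠ 0) {m : ℕ}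
    (hA : A ^ m = 1) : c ^ m = 1 := by
  have hfix : c ^ m • v = (1 : R) • v := by
    rw [← pow_mulVec_of_mulVec_eq_smul h, hA, one_mulVec, one_smul]
  exact smul_left_injective R hv hfix

section gammaMat

variable {d n : ℕ}

lemma gammaMat_mulVec_single_of_add_two_lt (l : Fin n) (hl : (l : ℕ) + 2 < n) :
    gammaMat d n *ᵥ Pi.single l 1 = Pi.single ⟨l + 1, by omega⟩ 1 := by
  ext k
  simp only [mulVec_single_one, col_apply, gammaMat, of_apply, Pi.single_apply, Fin.ext_iff]
  split_ifs <;> first | omega | simp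

lemma gammaMat_mulVec_single_of_add_two_eq (l : Fin n) (hl : (l : ℕ) + 2 = n) :
    gammaMat d n *ᵥ Pi.single l 1 = zetaC d • Pi.single ⟨0, by omega⟩ 1 := by
  ext k
  simp only [mulVec_single_one, col_apply, gammaMat, of_apply, Pi.smul_apply, Pi.single_apply,
    Fin.ext_iff]
  split_ifs <;> first | omega | simp

lemma gammaMat_mulVec_single_of_add_one_eq (l : Fin n) (hl : (l : ℕ) + 1 = n) :
    gammaMat d n *ᵥ Pi.single l 1 = (zetaC d)⁻¹ • Pi.single l 1 := by
  ext k
  simp only [mulVec_single_one, col_apply, gammaMat, of_apply, Pi.smul_apply, Pi.single_apply,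
    Fin.ext_iff]
  split_ifs <;> first | omega | simp

lemma gammaMat_pow_mulVec_single_zero (k : ℕ) (hk : k + 1 < n) :
    gammaMat d n ^ k *ᵥ Pi.single ⟨0, by omega⟩ 1 = Pi.single ⟨k, by omega⟩ 1 := by
  induction k with
  | zero => rw [pow_zero, one_mulVec]
  | succ k ih =>
    rw [pow_succ', ← mulVec_mulVec, ih (by omega),
      gammaMat_mulVec_single_of_add_two_lt _ (by simp only; omega)]

lemma gammaMat_pow_sub_one_mulVec_single (i : Fin n) (hi : (i : ℕ) + 1 < n) :
    gammaMat d n ^ (n - 1) *ᵥ Pi.single i 1 = zetaC d • Pi.single i 1 := by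
  have hzero : gammaMat d n ^ (n - 1) *ᵥ Pi.single ⟨0, by omega⟩ 1
      = zetaC d • Pi.single ⟨0, by omega⟩ 1 := by
    obtain ⟨m, hm⟩ : ∃ m, n = m + 2 := ⟨n - 2, by omega⟩
    subst hm
    rw [show m + 2 - 1 = m + 1 by omega, pow_succ', ← mulVec_mulVec,
      gammaMat_pow_mulVec_single_zero m (by omega), gammaMat_mulVec_single_of_add_two_eq _ rfl]
  have hi' : Pi.single i (1 : ℂ) = gammaMat d n ^ (i : ℕ) *ᵥ Pi.single ⟨0, by omega⟩ 1 :=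
    (gammaMat_pow_mulVec_single_zero i hi).symm
  rw [hi', mulVec_mulVec, ← pow_add, add_comm, pow_add, ← mulVec_mulVec, hzero, mulVec_smul]

lemma gammaMat_pow_sub_one :
    gammaMat d n ^ (n - 1) =
      diagonal fun i : Fin n => if (i : ℕ) + 1 = n then (zetaC d)⁻¹ ^ (n - 1) else zetaC d := by
  refine ext_of_mulVec_single fun i => ?_
  rw [diagonal_mulVec_single, mul_one]
  split_ifs with hi
  · rw [pow_mulVec_of_mulVec_eq_smul (gammaMat_mulVec_single_of_add_one_eq i hi),
      ← Pi.single_smul', smul_eq_mul, mul_one]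
  · rw [gammaMat_pow_sub_one_mulVec_single i (by omega), ← Pi.single_smul', smul_eq_mul, mul_one]

lemma gammaMat_pow_mul_sub_one (hd : d ≠ 0) : gammaMat d n ^ (d * (n - 1)) = 1 := by
  have hζ : zetaC d ^ d = 1 := (zetaC_isPrimitiveRoot hd).pow_eq_one
  rw [mul_comm, pow_mul, gammaMat_pow_sub_one, diagonal_pow, ← diagonal_one]
  congr 1
  funext i
  simp only [Pi.pow_apply]
  split_ifs
  · rw [← pow_mul, mul_comm, pow_mul, inv_pow, hζ, inv_one, one_pow]
  · exact hζ

lemma gammaMat_row (hn : 2 ≤ n) (k : Fin n) :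
    gammaMat d n k =
      if (k : ℕ) + 1 = n then Pi.single k (zetaC d)⁻¹
      else if (k : ℕ) = 0 then Pi.single ⟨n - 2, by omega⟩ (zetaC d)
      else Pi.single ⟨k - 1, by omega⟩ 1 := by
  funext l
  simp only [gammaMat, of_apply, ite_apply, Pi.single_apply, Fin.ext_iff]
  split_ifs <;> first | rfl | omega

lemma gammaMat_mulVec_apply (hn : 2 ≤ n) (x : Fin n → ℂ) (k : Fin n) :
    (gammaMat d n *ᵥ x) k =
      if (k : ℕ) + 1 = n then (zetaC d)⁻¹ * x k
      else if (k : ℕ) = 0 then zetaC d * x ⟨n - 2, by omega⟩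
      else x ⟨k - 1, by omega⟩ := by
  rw [mulVec, gammaMat_row hn]
  split_ifs <;> simp only [single_dotProduct, one_mul]

end gammaMat

noncomputable def gammaEigenvector (d n : ℕ) : Fin n → ℂ :=
  fun k => if (k : ℕ) + 1 = n then 0 else zetaC (d * (n - 1)) ^ (n - 2 - k)

section gammaEigenvector

variable {d n : ℕ}

lemma gammaMat_mulVec_gammaEigenvector (hn : 2 ≤ n) :
    gammaMat d n *ᵥ gammaEigenvector d n = zetaC (d * (n - 1)) • gammaEigenvector d n := by
  have hζ : zetaC (d * (n - 1)) ^ (n - 1) = zetaC d := by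
    rw [mul_comm, zetaC_mul_pow d (by omega)]
  funext k
  rw [gammaMat_mulVec_apply hn, Pi.smul_apply, smul_eq_mul]
  simp only [gammaEigenvector]
  split_ifs <;> try omega
  · rw [mul_zero, mul_zero]
  · rw [Nat.sub_self, pow_zero, mul_one, ← pow_succ', ← hζ]
    congr 1
    omega
  · rw [← pow_succ']
    congr 1
    omega

lemma gammaEigenvector_ne_zero (hn : 2 ≤ n) : gammaEigenvector d n ≠ 0 := by
  intro h
  have h0 := congrFun h ⟨0, by omega⟩
  simp only [gammaEigenvector, Pi.zero_apply] at h0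
  rw [if_neg (by omega)] at h0
  exact pow_ne_zero _ (Complex.exp_ne_zero _) h0

lemma gammaEigenvector_pow_injective (hd : d ≠ 0) (hn : 2 ≤ n) :
    Function.Injective fun k => gammaEigenvector d n k ^ d := by
  have hroot : IsPrimitiveRoot (zetaC (d * (n - 1)) ^ d) (n - 1) := by
    rw [zetaC_mul_pow _ hd]
    exact zetaC_isPrimitiveRoot (by omega)
  have hpow : ∀ k : Fin n, gammaEigenvector d n k ^ d =
      if (k : ℕ) + 1 = n then 0 else (zetaC (d * (n - 1)) ^ d) ^ (n - 2 - k) := by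
    intro k
    simp only [gammaEigenvector]
    split_ifs
    · exact zero_pow hd
    · exact pow_right_comm _ _ _
  intro k l hkl
  have hne : zetaC (d * (n - 1)) ^ d ≠ 0 := hroot.ne_zero (by omega)
  simp only [hpow] at hkl
  split_ifs at hkl with hk hl hl
  · exact Fin.ext (by omega)
  · exact absurd hkl.symm (pow_ne_zero _ hne)
  · exact absurd hkl (pow_ne_zero _ hne)
  · have := hroot.pow_inj (by omega) (by omega) hkl
    exact Fin.ext (by omega)

end gammaEigenvector

lemma orderOf_eq_of_mulVec_eq_smul {ι K : Type*} [Fintype ι] [DecidableEq ι] [Field K]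
    {γ : GL ι K} {v : ι → K} {θ : K} {N : ℕ} (hθ : IsPrimitiveRoot θ N)
    (hv : (γ : Matrix ι ι K) *ᵥ v = θ • v) (hv0 : v ≠ 0) (hγ : γ ^ N = 1) : orderOf γ = N := by
  rw [hθ.eq_orderOf, orderOf_eq_orderOf_iff]
  intro m
  constructor
  · intro hm
    refine pow_eq_one_of_mulVec_eq_smul hv hv0 ?_
    rw [← Units.val_pow_eq_pow_val, hm, Units.val_one]
  · intro hm
    obtain ⟨c, rfl⟩ := (hθ.pow_eq_one_iff_dvd m).1 hm
    rw [pow_mul, hγ, one_pow]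

lemma mem_fixSpace_iff {n : ℕ} {t : GLn n} {v : Fin n → ℂ} :
    v ∈ fixSpace t ↔ (t : Matrix (Fin n) (Fin n) ℂ) *ᵥ v = v := by
  simp [fixSpace, sub_eq_zero]

lemma fixSpace_one {n : ℕ} : fixSpace (1 : GLn n) = ⊤ := by
  ext v
  simp [mem_fixSpace_iff]

lemma IsGdd.eq_one_of_mulVec_eq_self {d n : ℕ} {t : GLn n} (ht : IsGdd d n t) {v : Fin n → ℂ}
    (hv : Function.Injective fun k => v k ^ d) (hfix : (t : Matrix (Fin n) (Fin n) ℂ) *ᵥ v = v) :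
    t = 1 := by
  obtain ⟨σ, z, hzd, hprod, hentry⟩ := ht
  have hcoord : ∀ l, v (σ l) = z l * v l := by
    intro l
    have hrow : (t : Matrix (Fin n) (Fin n) ℂ) (σ l) = Pi.single l (z l) := by
      funext j
      simp only [hentry, Pi.single_apply, σ.injective.eq_iff, eq_comm (a := l)]
      split_ifs with h <;> simp [h]
    rw [← hfix, mulVec, hrow, single_dotProduct, hfix]
  have hσ : ∀ l, σ l = l := fun l => hv (by simp only [hcoord, mul_pow, hzd, one_mul])
  have hz : ∀ l, v l ≠ 0 → z l = 1 := fun l hl =>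
    (mul_eq_right₀ hl).1 (by rw [← hcoord, hσ])
  have hz_all : ∀ l, z l = 1 := by
    intro l
    by_cases hl : v l = 0
    · have hothers : ∀ k ≠ l, z k = 1 := fun k hk =>
        hz k fun hk0 => hk (hv (by simp only [hk0, hl]))
      rwa [Finset.prod_eq_single l (fun k _ hk => hothers k hk) (by simp)] at hprod
    · exact hz l hl
  ext k l
  rw [hentry, hσ, hz_all, Units.val_one, one_apply]

lemma notMem_fixSpace_of_injective_pow {d n : ℕ} (hn : n ≠ 0) {v : Fin n → ℂ}
    (hv : Function.Injective fun k => v k ^ d) {t : GLn n} (ht : IsGddRefl d n t) :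
    v ∉ fixSpace t := by
  intro hmem
  obtain ⟨hgdd, -, hrank⟩ := ht
  rw [hgdd.eq_one_of_mulVec_eq_self hv (mem_fixSpace_iff.1 hmem), fixSpace_one, finrank_top,
    Module.finrank_fin_fun] at hrank
  omega

/-- For `d ≥ 3` and `n ≥ 2`, the element `γ` has order `d(n−1)` and has
a regular eigenvector for the primitive `d(n−1)`-th root of unity `exp(2πi/(d(n−1)))`;
hence `γ` is a Coxeter element of `G(d,d,n)`. -/
theorem gamma_is_regular_of_order_dn_minus_one
    (d n : ℕ) (hd : 3 ≤ d) (hn : 2 ≤ n)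
    (γ : GLn n) (hγ : (γ : Matrix (Fin n) (Fin n) ℂ) = gammaMat d n) :
    orderOf γ = d * (n - 1) ∧
    ∃ v : Fin n → ℂ,
      (γ : Matrix (Fin n) (Fin n) ℂ).mulVec v =
        Complex.exp (2 * (Real.pi : ℂ) * Complex.I / ((d * (n - 1) : ℕ) : ℂ)) • v ∧
      ∀ t : GLn n, IsGddRefl d n t → v ∉ fixSpace t := by
  have hd0 : d ≠ 0 := by omega
  have heig : (γ : Matrix (Fin n) (Fin n) ℂ) *ᵥ gammaEigenvector d n =
      zetaC (d * (n - 1)) • gammaEigenvector d n := by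
    rw [hγ, gammaMat_mulVec_gammaEigenvector hn]
  have hγN : γ ^ (d * (n - 1)) = 1 := by
    rw [Units.ext_iff, Units.val_pow_eq_pow_val, hγ, gammaMat_pow_mul_sub_one hd0, Units.val_one]
  have hθ : IsPrimitiveRoot (zetaC (d * (n - 1))) (d * (n - 1)) :=
    zetaC_isPrimitiveRoot (Nat.mul_ne_zero hd0 (by omega))
  exact ⟨orderOf_eq_of_mulVec_eq_smul hθ heig (gammaEigenvector_ne_zero hn) hγN,
    gammaEigenvector d n, heig, fun t =>
      notMem_fixSpace_of_injective_pow (by omega) (gammaEigenvector_pow_injective hd0 hn)⟩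
end
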